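/- L¹(P)-bracketing of the FKM loss class: Let M > 0 and suppose ∫ ψ(‖x‖) P(dx) < ∞. For every ε > 0 there exists a finite class G_ε of P-integrable measurable functions on ℝ^p such that for every (F, A) ∈ Θ_k*(M) there exist ġ, ḡ ∈ G_ε with ġ(x) ≤ min_{f∈F} ψ(‖Aᵀx − f‖) ≤ ḡ(x) for all x ∈ ℝ^p, and ∫ ḡ(x) P(dx) − ∫ ġ(x) P(dx) < ε. -/
import Mathlib


open MeasureTheory Metric Filter ProbabilityTheory
open scoped ENNReal Classical

noncomputable section

/-- The set of real `p × q` column-wise orthonormal matrices (`AᵀA = I_q`). -/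
def Stiefel (p q : ℕ) : Set (Matrix (Fin p) (Fin q) ℝ) :=
  {A | A.transpose * A = 1}

/-- `x ↦ Aᵀ x`, viewed as a map from Euclidean `ℝ^p` to Euclidean `ℝ^q`. -/
def mulVecT {p q : ℕ} (A : Matrix (Fin p) (Fin q) ℝ)
    (x : EuclideanSpace ℝ (Fin p)) : EuclideanSpace ℝ (Fin q) :=
  (WithLp.equiv 2 (Fin q → ℝ)).symm (A.transpose.mulVec (WithLp.equiv 2 (Fin p → ℝ) x))

/-- Pointwise FKM loss `min_{f ∈ F} ψ(‖Aᵀx − f‖)` (junk value `0` if `F = ∅`). -/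
def lossFn {p q : ℕ} (ψ : ℝ → ℝ) (F : Finset (EuclideanSpace ℝ (Fin q)))
    (A : Matrix (Fin p) (Fin q) ℝ) (x : EuclideanSpace ℝ (Fin p)) : ℝ :=
  if h : F.Nonempty then F.inf' h (fun f => ψ ‖mulVecT A x - f‖) else 0

/-- FKM objective `Ψ(F, A, Q) = ∫ min_{f∈F} ψ(‖Aᵀx − f‖) Q(dx)`. -/
def Psi {p q : ℕ} (ψ : ℝ → ℝ) (F : Finset (EuclideanSpace ℝ (Fin q)))
    (A : Matrix (Fin p) (Fin q) ℝ) (Q : Measure (EuclideanSpace ℝ (Fin p))) : ℝ :=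
  ∫ x, lossFn ψ F A x ∂Q

/-- Parameter: a finite set of centers in `ℝ^q` together with a `p×q` matrix. -/
abbrev Param (p q : ℕ) := Finset (EuclideanSpace ℝ (Fin q)) × Matrix (Fin p) (Fin q) ℝ

/-- `Ξ_k = R_k × O(p×q)`. -/
def Xi (p q k : ℕ) : Set (Param p q) :=
  {θ | θ.1.Nonempty ∧ θ.1.card ≤ k ∧ θ.2 ∈ Stiefel p q}

/-- `Θ_k*(M) = R_k*(M) × O(p×q)`, centers restricted to the closed ball `B_q(M)`. -/
def XiStar (p q k : ℕ) (M : ℝ) : Set (Param p q) :=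
  {θ | θ ∈ Xi p q k ∧ (θ.1 : Set (EuclideanSpace ℝ (Fin q))) ⊆ closedBall 0 M}

/-- `m_j(Q) = inf {Ψ(θ, Q) : θ ∈ Ξ_j}`. -/
def mval (ψ : ℝ → ℝ) (p q j : ℕ) (Q : Measure (EuclideanSpace ℝ (Fin p))) : ℝ :=
  sInf ((fun θ : Param p q => Psi ψ θ.1 θ.2 Q) '' Xi p q j)

/-- `m_k*(Q | M) = inf {Ψ(θ, Q) : θ ∈ Θ_k*(M)}`. -/
def mvalStar (ψ : ℝ → ℝ) (p q k : ℕ) (M : ℝ)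
    (Q : Measure (EuclideanSpace ℝ (Fin p))) : ℝ :=
  sInf ((fun θ : Param p q => Psi ψ θ.1 θ.2 Q) '' XiStar p q k M)

/-- `Θ′`, the set of population global optimizers over `Ξ_k`. -/
def OptSet (ψ : ℝ → ℝ) (p q k : ℕ) (P : Measure (EuclideanSpace ℝ (Fin p))) :
    Set (Param p q) :=
  {θ | θ ∈ Xi p q k ∧ Psi ψ θ.1 θ.2 P = mval ψ p q k P}

/-- `Θ*`, the set of optimizers over the restricted space `Θ_k*(M)`. -/
def OptSetStar (ψ : ℝ → ℝ) (p q k : ℕ) (M : ℝ)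
    (P : Measure (EuclideanSpace ℝ (Fin p))) : Set (Param p q) :=
  {θ | θ ∈ XiStar p q k M ∧ Psi ψ θ.1 θ.2 P = mvalStar ψ p q k M P}

/-- Frobenius distance between matrices. -/
def frobDist {m n : ℕ} (A B : Matrix (Fin m) (Fin n) ℝ) : ℝ :=
  Real.sqrt (∑ i, ∑ j, (A i j - B i j) ^ 2)

/-- Product metric `d = √(d_F² + d_H²)` on parameters. -/
def paramDist {p q : ℕ} (θ θ' : Param p q) : ℝ :=
  Real.sqrt (frobDist θ.2 θ'.2 ^ 2 +
    hausdorffDist (θ.1 : Set (EuclideanSpace ℝ (Fin q)))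
      (θ'.1 : Set (EuclideanSpace ℝ (Fin q))) ^ 2)

/-- Distance from a parameter to a set of parameters. -/
def distToSet {p q : ℕ} (θ : Param p q) (S : Set (Param p q)) : ℝ :=
  sInf (paramDist θ '' S)

/-- Empirical measure `P_n` of `X_1(ω), …, X_n(ω)`. -/
def empMeasure {Ω E : Type*} [MeasurableSpace Ω] [MeasurableSpace E]
    (X : ℕ → Ω → E) (ω : Ω) (n : ℕ) : Measure E :=
  (n : ℝ≥0∞)⁻¹ • ∑ i ∈ Finset.range n, Measure.dirac (X i ω)


/- ===== auxiliary lemmas ===== -/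

lemma coord_le_norm {n : ℕ} (v : EuclideanSpace ℝ (Fin n)) (i : Fin n) : |v i| ≤ ‖v‖ := by
  rw [EuclideanSpace.norm_eq]
  calc |v i| = Real.sqrt (‖v i‖ ^ 2) := by
        rw [Real.sqrt_sq (norm_nonneg _), Real.norm_eq_abs]
  _ ≤ Real.sqrt (∑ j, ‖v j‖ ^ 2) := Real.sqrt_le_sqrt
      (Finset.single_le_sum (f := fun j => ‖v j‖ ^ 2) (fun j _ => sq_nonneg _) (Finset.mem_univ i))

lemma norm_le_sum_abs {n : ℕ} (v : EuclideanSpace ℝ (Fin n)) : ‖v‖ ≤ ∑ j, |v j| := by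
  rw [EuclideanSpace.norm_eq]
  have h1 : ∑ j, ‖v j‖ ^ 2 ≤ (∑ j, |v j|) ^ 2 := by
    rw [sq (∑ j, |v j|), Finset.sum_mul]
    refine Finset.sum_le_sum fun j _ => ?_
    have h : |v j| ≤ ∑ i, |v i| :=
      Finset.single_le_sum (f := fun i => |v i|) (fun i _ => abs_nonneg _) (Finset.mem_univ j)
    have := abs_nonneg (v j)
    rw [Real.norm_eq_abs]
    nlinarith
  calc Real.sqrt (∑ j, ‖v j‖ ^ 2) ≤ Real.sqrt ((∑ j, |v j|) ^ 2) := Real.sqrt_le_sqrt h1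
  _ = ∑ j, |v j| := Real.sqrt_sq (Finset.sum_nonneg fun _ _ => abs_nonneg _)

lemma mulVecT_apply {p q : ℕ} (A : Matrix (Fin p) (Fin q) ℝ) (x : EuclideanSpace ℝ (Fin p))
    (j : Fin q) : mulVecT A x j = ∑ i, A i j * x i := by
  simp [mulVecT, Matrix.mulVec, dotProduct, Matrix.transpose]

lemma mulVecT_sub_bound {p q : ℕ} (A B : Matrix (Fin p) (Fin q) ℝ)
    (x : EuclideanSpace ℝ (Fin p)) {δ : ℝ} (hδ : 0 ≤ δ)
    (h : ∀ i j, |A i j - B i j| ≤ δ) :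
    ‖mulVecT A x - mulVecT B x‖ ≤ (p * q : ℝ) * δ * ‖x‖ := by
  have hcoord : ∀ j, (mulVecT A x - mulVecT B x) j = ∑ i, (A i j - B i j) * x i := by
    intro j
    have : (mulVecT A x - mulVecT B x) j = mulVecT A x j - mulVecT B x j := rfl
    rw [this, mulVecT_apply, mulVecT_apply, ← Finset.sum_sub_distrib]
    congr 1; ext i; ring
  calc ‖mulVecT A x - mulVecT B x‖ ≤ ∑ j, |(mulVecT A x - mulVecT B x) j| :=
        norm_le_sum_abs _
  _ ≤ ∑ _j : Fin q, ∑ _i : Fin p, δ * ‖x‖ := by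
      refine Finset.sum_le_sum fun j _ => ?_
      rw [hcoord j]
      calc |∑ i, (A i j - B i j) * x i| ≤ ∑ i, |(A i j - B i j) * x i| :=
            Finset.abs_sum_le_sum_abs _ _
      _ ≤ ∑ _i : Fin p, δ * ‖x‖ := by
          refine Finset.sum_le_sum fun i _ => ?_
          rw [abs_mul]
          exact mul_le_mul (h i j) (coord_le_norm x i) (abs_nonneg _) hδ
  _ = (q * p : ℝ) * (δ * ‖x‖) := by simp [Finset.sum_const, mul_assoc]
  _ = (p * q : ℝ) * δ * ‖x‖ := by ring

lemma mulVecT_zero {p q : ℕ} (x : EuclideanSpace ℝ (Fin p)) :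
    mulVecT (0 : Matrix (Fin p) (Fin q) ℝ) x = 0 := by
  unfold mulVecT
  simp [Matrix.transpose_zero, Matrix.zero_mulVec]

lemma mulVecT_norm_le {p q : ℕ} (A : Matrix (Fin p) (Fin q) ℝ)
    (x : EuclideanSpace ℝ (Fin p)) (h : ∀ i j, |A i j| ≤ 1) :
    ‖mulVecT A x‖ ≤ (p * q : ℝ) * ‖x‖ := by
  have := mulVecT_sub_bound A 0 x zero_le_one (fun i j => by simpa using h i j)
  rw [mulVecT_zero, sub_zero] at this
  simpa using this

lemma stiefel_entry {p q : ℕ} {A : Matrix (Fin p) (Fin q) ℝ} (hA : A ∈ Stiefel p q)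
    (i : Fin p) (j : Fin q) : |A i j| ≤ 1 := by
  have h : (A.transpose * A) j j = 1 := by rw [hA]; simp
  rw [Matrix.mul_apply] at h
  simp only [Matrix.transpose_apply] at h
  have h2 : A i j * A i j ≤ 1 := by
    rw [← h]
    exact Finset.single_le_sum (f := fun i => A i j * A i j) (fun i _ => mul_self_nonneg _)
      (Finset.mem_univ i)
  nlinarith [abs_nonneg (A i j), sq_abs (A i j)]

lemma stiefel_isCompact (p q : ℕ) : IsCompact (Stiefel p q) := by
  have hclosed : IsClosed (Stiefel p q) := by
    have : Continuous fun A : Matrix (Fin p) (Fin q) ℝ => A.transpose * A :=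
      (Continuous.matrix_mul (Continuous.matrix_transpose continuous_id) continuous_id)
    exact isClosed_singleton.preimage this
  have hsub : Stiefel p q ⊆ Set.univ.pi fun _ : Fin p => Set.univ.pi fun _ : Fin q =>
      Set.Icc (-1 : ℝ) 1 := by
    intro A hA i _
    intro j _
    exact abs_le.1 (stiefel_entry hA i j)
  have hcomp : IsCompact (Set.univ.pi fun _ : Fin p => Set.univ.pi fun _ : Fin q =>
      Set.Icc (-1 : ℝ) 1) :=
    isCompact_univ_pi fun _ => isCompact_univ_pi fun _ => isCompact_Icc
  exact hcomp.of_isClosed_subset hclosed hsub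

lemma metric_net {E : Type*} [MetricSpace E] {s : Set E} (hs : IsCompact s) (δ : ℝ)
    (hδ : 0 < δ) : ∃ t : Finset E, ↑t ⊆ s ∧ ∀ x ∈ s, ∃ y ∈ t, dist x y ≤ δ := by
  obtain ⟨t, hts, htf, hcov⟩ := hs.elim_finite_subcover_image (fun x _ => isOpen_ball)
    (fun x hx => Set.mem_biUnion hx (mem_ball_self hδ))
  refine ⟨htf.toFinset, by simpa using hts, fun x hx => ?_⟩
  obtain ⟨y, hy, hxy⟩ := Set.mem_iUnion₂.1 (hcov hx)
  exact ⟨y, by simpa using hy, le_of_lt (by simpa [dist_comm] using hxy)⟩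

lemma stiefel_net (p q : ℕ) (δ : ℝ) (hδ : 0 < δ) :
    ∃ t : Finset (Matrix (Fin p) (Fin q) ℝ), ↑t ⊆ Stiefel p q ∧
      ∀ A ∈ Stiefel p q, ∃ B ∈ t, ∀ i j, |A i j - B i j| ≤ δ := by
  have hopen : ∀ C : Matrix (Fin p) (Fin q) ℝ,
      IsOpen {B : Matrix (Fin p) (Fin q) ℝ | ∀ i j, |C i j - B i j| < δ} := by
    intro C
    have : {B : Matrix (Fin p) (Fin q) ℝ | ∀ i j, |C i j - B i j| < δ} =
        ⋂ i, ⋂ j, {B : Matrix (Fin p) (Fin q) ℝ | |C i j - B i j| < δ} := by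
      ext B; simp [Set.mem_iInter]
    rw [this]
    refine isOpen_iInter_of_finite fun i => isOpen_iInter_of_finite fun j => ?_
    have hc : Continuous fun B : Matrix (Fin p) (Fin q) ℝ => |C i j - B i j| :=
      (continuous_const.sub ((continuous_id.matrix_elem i j))).abs
    exact isOpen_lt hc continuous_const
  obtain ⟨t, hts, htf, hcov⟩ := (stiefel_isCompact p q).elim_finite_subcover_image
    (fun C _ => hopen C) (fun A hA => Set.mem_biUnion hA (fun i j => by simpa using hδ))
  refine ⟨htf.toFinset, by simpa using hts, fun A hA => ?_⟩
  obtain ⟨B, hB, hAB⟩ := Set.mem_iUnion₂.1 (hcov hA)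
  exact ⟨B, by simpa using hB, fun i j => by simpa [abs_sub_comm] using (hAB i j).le⟩

lemma mulVecT_continuous {p q : ℕ} (A : Matrix (Fin p) (Fin q) ℝ) :
    Continuous fun x : EuclideanSpace ℝ (Fin p) => mulVecT A x := by
  unfold mulVecT
  have h1 : Continuous fun v : Fin p → ℝ => A.transpose.mulVec v := by
    refine continuous_pi fun j => ?_
    simp only [Matrix.mulVec, dotProduct]
    exact continuous_finset_sum _ fun i _ => (continuous_const.mul (continuous_apply i))
  exact (PiLp.continuous_toLp _ _).comp
    (h1.comp (PiLp.continuous_ofLp 2 fun _ : Fin p => ℝ))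

lemma continuous_finset_inf' {ι E : Type*} [TopologicalSpace E] {F : Finset ι}
    (h : F.Nonempty) (φ : ι → E → ℝ) (hφ : ∀ f, Continuous (φ f)) :
    Continuous fun x => F.inf' h (fun f => φ f x) := by
  rw [continuous_iff_continuousAt]
  intro x
  exact Filter.Tendsto.finset_inf'_nhds_apply h fun i _ => (hφ i).continuousAt

lemma lossFn_continuous {p q : ℕ} (ψ : ℝ → ℝ) (hψc : ContinuousOn ψ (Set.Ici 0))
    (F : Finset (EuclideanSpace ℝ (Fin q))) (A : Matrix (Fin p) (Fin q) ℝ) :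
    Continuous (lossFn ψ F A) := by
  unfold lossFn
  by_cases h : F.Nonempty
  · simp only [h, dif_pos]
    exact continuous_finset_inf' h _ fun f =>
      hψc.comp_continuous (((mulVecT_continuous A).sub continuous_const).norm)
        (fun x => norm_nonneg _)
  · simp only [h, dif_neg, not_false_iff]
    exact continuous_const

lemma psi_pow_doubling (ψ : ℝ → ℝ) (lam : ℝ) (hlam : 0 < lam)
    (hψlam : ∀ r : ℝ, 0 < r → ψ (2 * r) ≤ lam * ψ r) (m : ℕ) :
    ∀ r : ℝ, 0 < r → ψ (2 ^ m * r) ≤ lam ^ m * ψ r := by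
  induction m with
  | zero => intro r _; simp
  | succ m ih =>
    intro r hr
    have h1 : ψ (2 ^ (m + 1) * r) = ψ (2 * (2 ^ m * r)) := by ring_nf
    rw [h1]
    calc ψ (2 * (2 ^ m * r)) ≤ lam * ψ (2 ^ m * r) := hψlam _ (by positivity)
    _ ≤ lam * (lam ^ m * ψ r) := mul_le_mul_of_nonneg_left (ih r hr) hlam.le
    _ = lam ^ (m + 1) * ψ r := by ring

lemma env_bound (ψ : ℝ → ℝ) (lam : ℝ) (hlam : 0 < lam)
    (hψnn : ∀ r : ℝ, 0 ≤ r → 0 ≤ ψ r) (hψm : MonotoneOn ψ (Set.Ici 0))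
    (hψlam : ∀ r : ℝ, 0 < r → ψ (2 * r) ≤ lam * ψ r)
    (c M : ℝ) (hc : 1 ≤ c) (hM : 0 < M) {m : ℕ} (hm : c + M ≤ 2 ^ m) :
    ∀ r : ℝ, 0 ≤ r → ψ (c * r + M) ≤ lam ^ m * ψ r + ψ (2 ^ m) := by
  intro r hr
  rcases le_or_gt 1 r with h1 | h1
  · have key : c * r + M ≤ 2 ^ m * r := by nlinarith
    have h2 : ψ (c * r + M) ≤ ψ (2 ^ m * r) :=
      hψm (Set.mem_Ici.2 (by positivity)) (Set.mem_Ici.2 (by positivity)) key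
    have h3 := psi_pow_doubling ψ lam hlam hψlam m r (by linarith)
    have h4 : 0 ≤ ψ (2 ^ m) := hψnn _ (by positivity)
    linarith
  · have key : c * r + M ≤ 2 ^ m := by nlinarith
    have h2 : ψ (c * r + M) ≤ ψ (2 ^ m) :=
      hψm (Set.mem_Ici.2 (by positivity)) (Set.mem_Ici.2 (by positivity)) key
    have h4 : 0 ≤ lam ^ m * ψ r := mul_nonneg (by positivity) (hψnn r hr)
    linarith

lemma env_integrable {p : ℕ} (ψ : ℝ → ℝ) (lam : ℝ) (hlam : 0 < lam)
    (hψnn : ∀ r : ℝ, 0 ≤ r → 0 ≤ ψ r) (hψc : ContinuousOn ψ (Set.Ici 0))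
    (hψm : MonotoneOn ψ (Set.Ici 0))
    (hψlam : ∀ r : ℝ, 0 < r → ψ (2 * r) ≤ lam * ψ r)
    (c M : ℝ) (hc : 1 ≤ c) (hM : 0 < M)
    (P : Measure (EuclideanSpace ℝ (Fin p))) [IsProbabilityMeasure P]
    (hint : Integrable (fun x => ψ ‖x‖) P) :
    Integrable (fun x : EuclideanSpace ℝ (Fin p) => ψ (c * ‖x‖ + M)) P := by
  obtain ⟨m, hm⟩ := pow_unbounded_of_one_lt (c + M) (one_lt_two)
  have hcont : Continuous fun x : EuclideanSpace ℝ (Fin p) => ψ (c * ‖x‖ + M) :=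
    hψc.comp_continuous ((continuous_const.mul continuous_norm).add continuous_const)
      (fun x => Set.mem_Ici.2 (by positivity))
  refine Integrable.mono' ((hint.const_mul (lam ^ m)).add (integrable_const (ψ (2 ^ m))))
    hcont.aestronglyMeasurable ?_
  filter_upwards with x
  rw [Real.norm_eq_abs, abs_of_nonneg (hψnn _ (by positivity))]
  exact env_bound ψ lam hlam hψnn hψm hψlam c M hc hM hm.le ‖x‖ (norm_nonneg x)

lemma tail_small {p : ℕ} (g : EuclideanSpace ℝ (Fin p) → ℝ)
    (P : Measure (EuclideanSpace ℝ (Fin p))) [IsProbabilityMeasure P]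
    (hg : Integrable g P) :
    ∀ ε : ℝ, 0 < ε → ∃ R : ℝ, 0 < R ∧
      ∫ x in (closedBall (0 : EuclideanSpace ℝ (Fin p)) R)ᶜ, g x ∂P < ε := by
  intro ε hε
  have hmono : Monotone fun n : ℕ => closedBall (0 : EuclideanSpace ℝ (Fin p)) n := fun a b hab =>
    closedBall_subset_closedBall (by exact_mod_cast hab)
  have hall : (⋃ n : ℕ, closedBall (0 : EuclideanSpace ℝ (Fin p)) n) = Set.univ :=
    iUnion_closedBall_nat 0
  have ht := tendsto_setIntegral_of_monotone (fun n : ℕ => measurableSet_closedBall)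
    hmono (by rw [hall]; exact hg.integrableOn)
  rw [hall, setIntegral_univ] at ht
  have h2 : ∀ᶠ n : ℕ in atTop,
      ∫ x, g x ∂P - ∫ x in closedBall (0 : EuclideanSpace ℝ (Fin p)) n, g x ∂P < ε := by
    have h3 : Tendsto (fun n : ℕ =>
        ∫ x, g x ∂P - ∫ x in closedBall (0 : EuclideanSpace ℝ (Fin p)) n, g x ∂P)
        atTop (nhds 0) := by
      have := ht.const_sub (∫ x, g x ∂P)
      simpa using this
    exact h3.eventually (eventually_lt_nhds hε)
  obtain ⟨n, hn, hn1⟩ := (h2.and (eventually_ge_atTop 1)).exists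
  refine ⟨n, by exact_mod_cast hn1, ?_⟩
  have := integral_add_compl
    (measurableSet_closedBall (x := (0 : EuclideanSpace ℝ (Fin p))) (ε := (n : ℝ))) hg
  linarith

lemma lossFn_nonneg {p q : ℕ} (ψ : ℝ → ℝ) (hψnn : ∀ r : ℝ, 0 ≤ r → 0 ≤ ψ r)
    (F : Finset (EuclideanSpace ℝ (Fin q))) (A : Matrix (Fin p) (Fin q) ℝ)
    (x : EuclideanSpace ℝ (Fin p)) : 0 ≤ lossFn ψ F A x := by
  unfold lossFn
  split_ifs with h
  · exact Finset.le_inf' h _ fun f _ => hψnn _ (norm_nonneg _)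
  · exact le_refl 0

lemma lossFn_le {p q : ℕ} (ψ : ℝ → ℝ)
    {F : Finset (EuclideanSpace ℝ (Fin q))} (hF : F.Nonempty)
    (A : Matrix (Fin p) (Fin q) ℝ) (x : EuclideanSpace ℝ (Fin p))
    {f₀ : EuclideanSpace ℝ (Fin q)} (hf₀ : f₀ ∈ F) :
    lossFn ψ F A x ≤ ψ ‖mulVecT A x - f₀‖ := by
  unfold lossFn
  rw [dif_pos hF]
  exact Finset.inf'_le _ hf₀

lemma loss_le_loss_add {p q : ℕ} (ψ : ℝ → ℝ) (hψm : MonotoneOn ψ (Set.Ici 0))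
    {F F' : Finset (EuclideanSpace ℝ (Fin q))} (hF : F.Nonempty) (hF' : F'.Nonempty)
    (A A' : Matrix (Fin p) (Fin q) ℝ) (x : EuclideanSpace ℝ (Fin p))
    {η T ε' : ℝ} (hη : 0 ≤ η)
    (hψη : ∀ r : ℝ, 0 ≤ r → r ≤ T → ψ (r + η) ≤ ψ r + ε')
    (hmatch : ∀ f ∈ F, ∃ f' ∈ F', ‖mulVecT A' x - f'‖ ≤ ‖mulVecT A x - f‖ + η)
    (hT : ∀ f ∈ F, ‖mulVecT A x - f‖ ≤ T) :
    lossFn ψ F' A' x ≤ lossFn ψ F A x + ε' := by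
  unfold lossFn
  rw [dif_pos hF, dif_pos hF']
  obtain ⟨f, hf, hfe⟩ := Finset.exists_mem_eq_inf' hF (fun f => ψ ‖mulVecT A x - f‖)
  obtain ⟨f', hf', hff'⟩ := hmatch f hf
  calc F'.inf' hF' (fun g => ψ ‖mulVecT A' x - g‖) ≤ ψ ‖mulVecT A' x - f'‖ :=
        Finset.inf'_le _ hf'
  _ ≤ ψ (‖mulVecT A x - f‖ + η) :=
      hψm (Set.mem_Ici.2 (norm_nonneg _)) (Set.mem_Ici.2 (by positivity)) hff'
  _ ≤ ψ ‖mulVecT A x - f‖ + ε' := hψη _ (norm_nonneg _) (hT f hf)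
  _ = F.inf' hF (fun f => ψ ‖mulVecT A x - f‖) + ε' := by rw [hfe]

set_option maxHeartbeats 1000000 in
/-- **L¹(P)-bracketing of the FKM loss class.** -/
theorem FKM_loss_bracketing {p q k : ℕ} (hp : 0 < p) (hq : 0 < q)
    (hk : 0 < k) (hqp : q < p)
    (ψ : ℝ → ℝ) (lam : ℝ) (hlam : 0 < lam)
    (hψ0 : ψ 0 = 0) (hψnn : ∀ r : ℝ, 0 ≤ r → 0 ≤ ψ r)
    (hψc : ContinuousOn ψ (Set.Ici 0)) (hψm : MonotoneOn ψ (Set.Ici 0))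
    (hψlam : ∀ r : ℝ, 0 < r → ψ (2 * r) ≤ lam * ψ r)
    (M : ℝ) (hM : 0 < M)
    (P : Measure (EuclideanSpace ℝ (Fin p))) [IsProbabilityMeasure P]
    (hint : Integrable (fun x => ψ ‖x‖) P) :
    ∀ ε : ℝ, 0 < ε → ∃ G : Finset (EuclideanSpace ℝ (Fin p) → ℝ),
      (∀ g ∈ G, Measurable g ∧ Integrable g P) ∧
      ∀ θ ∈ XiStar p q k M, ∃ glo ∈ G, ∃ ghi ∈ G,
        (∀ x : EuclideanSpace ℝ (Fin p),
          glo x ≤ lossFn ψ θ.1 θ.2 x ∧ lossFn ψ θ.1 θ.2 x ≤ ghi x) ∧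
        (∫ x, ghi x ∂P) - (∫ x, glo x ∂P) < ε := by
  intro ε hε
  -- the constant `c = p q` and the integrable envelope
  set c : ℝ := (p : ℝ) * q with hcdef
  have hc : 1 ≤ c := by
    have : (1 : ℝ) ≤ (p : ℝ) := by exact_mod_cast hp
    have : (1 : ℝ) ≤ (q : ℝ) := by exact_mod_cast hq
    nlinarith [show (1:ℝ) ≤ (p:ℝ) from by exact_mod_cast hp]
  set env : EuclideanSpace ℝ (Fin p) → ℝ := fun x => ψ (c * ‖x‖ + M) with henvdef
  have henv_int : Integrable env P :=
    env_integrable ψ lam hlam hψnn hψc hψm hψlam c M hc hM P hint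
  have henv_nn : ∀ x, 0 ≤ env x := fun x => hψnn _ (by positivity)
  have henv_cont : Continuous env :=
    hψc.comp_continuous ((continuous_const.mul continuous_norm).add continuous_const)
      (fun x => Set.mem_Ici.2 (by positivity))
  -- tail radius
  obtain ⟨R, hR, htail⟩ := tail_small env P henv_int (ε / 4) (by linarith)
  set ε' : ℝ := ε / 4 with hε'def
  have hε'pos : 0 < ε' := by positivity
  set T : ℝ := c * R + M + 1 with hTdef
  have hT0 : 0 ≤ T := by positivity
  -- uniform continuity of ψ on [0, T]
  have huc := (isCompact_Icc (a := (0:ℝ)) (b := T)).uniformContinuousOn_of_continuous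
    (hψc.mono Set.Icc_subset_Ici_self)
  rw [Metric.uniformContinuousOn_iff] at huc
  obtain ⟨η0, hη0, hucb⟩ := huc ε' hε'pos
  set η : ℝ := min (η0 / 2) 1 with hηdef
  have hηpos : 0 < η := lt_min (by linarith) one_pos
  have hη1 : η ≤ 1 := min_le_right _ _
  have hηlt : η < η0 := lt_of_le_of_lt (min_le_left _ _) (by linarith)
  have hψη : ∀ r : ℝ, 0 ≤ r → r ≤ T - 1 → ψ (r + η) ≤ ψ r + ε' := by
    intro r h0 hle
    have ha : r + η ∈ Set.Icc (0:ℝ) T := ⟨by positivity, by linarith⟩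
    have hb : r ∈ Set.Icc (0:ℝ) T := ⟨h0, by linarith⟩
    have hd : dist (r + η) r < η0 := by
      rw [Real.dist_eq]
      rw [abs_of_nonneg (by linarith : (0:ℝ) ≤ r + η - r)]
      linarith
    have := hucb _ ha _ hb hd
    rw [Real.dist_eq] at this
    have := abs_lt.1 this
    linarith [this.1, this.2]
  -- discretization scale
  set δ : ℝ := η / (c * R + 1) with hδdef
  have hcR : 0 < c * R + 1 := by positivity
  have hδpos : 0 < δ := by positivity
  have hδkey : c * δ * R + δ ≤ η := by
    have : δ * (c * R + 1) = η := div_mul_cancel₀ η (ne_of_gt hcR)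
    nlinarith
  -- nets
  obtain ⟨NB, hNBsub, hNBnet⟩ :=
    metric_net (isCompact_closedBall (0 : EuclideanSpace ℝ (Fin q)) M) δ hδpos
  obtain ⟨NS, hNSsub, hNSnet⟩ := stiefel_net p q δ hδpos
  -- nearest-net-point map
  have hnm : ∀ f : EuclideanSpace ℝ (Fin q), ∃ g : EuclideanSpace ℝ (Fin q),
      f ∈ closedBall (0 : EuclideanSpace ℝ (Fin q)) M → g ∈ NB ∧ dist f g ≤ δ := by
    intro f
    by_cases h : f ∈ closedBall (0 : EuclideanSpace ℝ (Fin q)) M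
    · obtain ⟨y, hy, hdy⟩ := hNBnet f h
      exact ⟨y, fun _ => ⟨hy, hdy⟩⟩
    · exact ⟨f, fun hf => absurd hf h⟩
  choose nmap hnmap using hnm
  -- the two families of bracketing functions
  set ghiF : Finset (EuclideanSpace ℝ (Fin q)) × Matrix (Fin p) (Fin q) ℝ →
      EuclideanSpace ℝ (Fin p) → ℝ := fun z x =>
    if ‖x‖ ≤ R then lossFn ψ z.1 z.2 x + ε' else env x with hghiFdef
  set gloF : Finset (EuclideanSpace ℝ (Fin q)) × Matrix (Fin p) (Fin q) ℝ →
      EuclideanSpace ℝ (Fin p) → ℝ := fun z x =>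
    if ‖x‖ ≤ R then max (lossFn ψ z.1 z.2 x - ε') 0 else 0 with hgloFdef
  set G : Finset (EuclideanSpace ℝ (Fin p) → ℝ) :=
    (NB.powerset ×ˢ NS).image ghiF ∪ (NB.powerset ×ˢ NS).image gloF with hGdef
  have hmeasset : MeasurableSet {x : EuclideanSpace ℝ (Fin p) | ‖x‖ ≤ R} :=
    measurableSet_le continuous_norm.measurable measurable_const
  -- loss is dominated by the envelope for admissible parameters
  have hloss_le_env : ∀ (F : Finset (EuclideanSpace ℝ (Fin q))),
      (F : Set (EuclideanSpace ℝ (Fin q))) ⊆ closedBall 0 M →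
      ∀ A, A ∈ Stiefel p q → ∀ x, lossFn ψ F A x ≤ env x := by
    intro F hFsub A hA x
    by_cases h : F.Nonempty
    · obtain ⟨f₀, hf₀⟩ := h
      refine le_trans (lossFn_le ψ ⟨f₀, hf₀⟩ A x hf₀) ?_
      refine hψm (Set.mem_Ici.2 (norm_nonneg _)) (Set.mem_Ici.2 (by positivity)) ?_
      have h1 : ‖mulVecT A x‖ ≤ c * ‖x‖ :=
        mulVecT_norm_le A x (fun i j => stiefel_entry hA i j)
      have h2 : ‖f₀‖ ≤ M := mem_closedBall_zero_iff.1 (hFsub hf₀)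
      calc ‖mulVecT A x - f₀‖ ≤ ‖mulVecT A x‖ + ‖f₀‖ := norm_sub_le _ _
      _ ≤ c * ‖x‖ + M := add_le_add h1 h2
    · unfold lossFn
      rw [dif_neg h]
      exact henv_nn x
  -- measurability and integrability of the family members
  have hfam : ∀ z ∈ NB.powerset ×ˢ NS,
      (Measurable (ghiF z) ∧ Integrable (ghiF z) P) ∧
      (Measurable (gloF z) ∧ Integrable (gloF z) P) := by
    rintro ⟨Fz, Az⟩ hz
    rw [Finset.mem_product] at hz
    have hFz : (Fz : Set (EuclideanSpace ℝ (Fin q))) ⊆ closedBall 0 M := by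
      intro f hf
      exact hNBsub (Finset.mem_powerset.1 hz.1 hf)
    have hAz : Az ∈ Stiefel p q := hNSsub hz.2
    have hlc : Continuous (lossFn ψ Fz Az) := lossFn_continuous ψ hψc Fz Az
    have hm1 : Measurable (ghiF (Fz, Az)) :=
      Measurable.ite hmeasset (hlc.measurable.add measurable_const) henv_cont.measurable
    have hm2 : Measurable (gloF (Fz, Az)) :=
      Measurable.ite hmeasset ((hlc.measurable.sub measurable_const).max measurable_const)
        measurable_const
    have hdom1 : ∀ x, ‖ghiF (Fz, Az) x‖ ≤ env x + ε' := by
      intro x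
      simp only [hghiFdef]
      split_ifs with hx
      · rw [Real.norm_eq_abs, abs_of_nonneg (by
          have := lossFn_nonneg ψ hψnn Fz Az x; linarith)]
        have := hloss_le_env Fz hFz Az hAz x
        linarith
      · rw [Real.norm_eq_abs, abs_of_nonneg (henv_nn x)]
        linarith [henv_nn x]
    have hdom2 : ∀ x, ‖gloF (Fz, Az) x‖ ≤ env x + ε' := by
      intro x
      simp only [hgloFdef]
      split_ifs with hx
      · rw [Real.norm_eq_abs, abs_of_nonneg (le_max_right _ _)]
        refine max_le ?_ (by linarith [henv_nn x])
        have := hloss_le_env Fz hFz Az hAz x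
        linarith
      · simp [henv_nn x]
        linarith [henv_nn x]
    have hdint : Integrable (fun x => env x + ε') P := henv_int.add (integrable_const ε')
    exact ⟨⟨hm1, Integrable.mono' hdint hm1.aestronglyMeasurable
        (Filter.Eventually.of_forall hdom1)⟩,
      ⟨hm2, Integrable.mono' hdint hm2.aestronglyMeasurable
        (Filter.Eventually.of_forall hdom2)⟩⟩
  refine ⟨G, ?_, ?_⟩
  · -- measurability/integrability of all members of G
    intro g hg
    rw [hGdef, Finset.mem_union] at hg
    rcases hg with hg | hg
    · obtain ⟨z, hz, rfl⟩ := Finset.mem_image.1 hg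
      exact (hfam z hz).1
    · obtain ⟨z, hz, rfl⟩ := Finset.mem_image.1 hg
      exact (hfam z hz).2
  · -- the bracketing property
    rintro ⟨F, A⟩ ⟨⟨hFne, hFcard, hAst⟩, hFsub⟩
    obtain ⟨Ai, hAiNS, hAAi⟩ := hNSnet A hAst
    have hAi_st : Ai ∈ Stiefel p q := hNSsub hAiNS
    set Fi : Finset (EuclideanSpace ℝ (Fin q)) := F.image nmap with hFidef
    have hFiNB : Fi ⊆ NB := by
      intro y hy
      obtain ⟨f, hf, rfl⟩ := Finset.mem_image.1 hy
      exact (hnmap f (hFsub hf)).1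
    have hFine : Fi.Nonempty := hFne.image _
    have hFisub : (Fi : Set (EuclideanSpace ℝ (Fin q))) ⊆ closedBall 0 M := by
      intro y hy
      exact hNBsub (hFiNB hy)
    have hzmem : (Fi, Ai) ∈ NB.powerset ×ˢ NS :=
      Finset.mem_product.2 ⟨Finset.mem_powerset.2 hFiNB, hAiNS⟩
    refine ⟨gloF (Fi, Ai), by
        rw [hGdef, Finset.mem_union]
        exact Or.inr (Finset.mem_image_of_mem _ hzmem),
      ghiF (Fi, Ai), by
        rw [hGdef, Finset.mem_union]
        exact Or.inl (Finset.mem_image_of_mem _ hzmem), ?_, ?_⟩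
    · -- pointwise bracketing
      intro x
      by_cases hx : ‖x‖ ≤ R
      · -- inside the ball: the two-sided comparison
        have hAdiff : ‖mulVecT Ai x - mulVecT A x‖ ≤ c * δ * R := by
          have h1 : ‖mulVecT Ai x - mulVecT A x‖ ≤ c * δ * ‖x‖ := by
            have := mulVecT_sub_bound Ai A x hδpos.le
              (fun i j => by rw [abs_sub_comm]; exact hAAi i j)
            simpa [hcdef] using this
          calc ‖mulVecT Ai x - mulVecT A x‖ ≤ c * δ * ‖x‖ := h1
          _ ≤ c * δ * R := mul_le_mul_of_nonneg_left hx (by positivity)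
        have hboundA : ∀ f ∈ F, ‖mulVecT A x - f‖ ≤ T - 1 := by
          intro f hf
          have h1 : ‖mulVecT A x‖ ≤ c * ‖x‖ :=
            mulVecT_norm_le A x (fun i j => stiefel_entry hAst i j)
          have h2 : ‖f‖ ≤ M := mem_closedBall_zero_iff.1 (hFsub hf)
          have h3 : c * ‖x‖ ≤ c * R := mul_le_mul_of_nonneg_left hx (by positivity)
          calc ‖mulVecT A x - f‖ ≤ ‖mulVecT A x‖ + ‖f‖ := norm_sub_le _ _
          _ ≤ c * R + M := by linarith
          _ = T - 1 := by rw [hTdef]; ring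
        have hboundAi : ∀ f' ∈ Fi, ‖mulVecT Ai x - f'‖ ≤ T - 1 := by
          intro f' hf'
          have h1 : ‖mulVecT Ai x‖ ≤ c * ‖x‖ :=
            mulVecT_norm_le Ai x (fun i j => stiefel_entry hAi_st i j)
          have h2 : ‖f'‖ ≤ M := mem_closedBall_zero_iff.1 (hFisub hf')
          have h3 : c * ‖x‖ ≤ c * R := mul_le_mul_of_nonneg_left hx (by positivity)
          calc ‖mulVecT Ai x - f'‖ ≤ ‖mulVecT Ai x‖ + ‖f'‖ := norm_sub_le _ _
          _ ≤ c * R + M := by linarith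
          _ = T - 1 := by rw [hTdef]; ring
        have hmatch1 : ∀ f ∈ F, ∃ f' ∈ Fi,
            ‖mulVecT Ai x - f'‖ ≤ ‖mulVecT A x - f‖ + η := by
          intro f hf
          refine ⟨nmap f, Finset.mem_image_of_mem _ hf, ?_⟩
          have h2 : ‖f - nmap f‖ ≤ δ := by
            rw [← dist_eq_norm]; exact (hnmap f (hFsub hf)).2
          have heq : mulVecT Ai x - nmap f =
              (mulVecT A x - f) + (mulVecT Ai x - mulVecT A x) + (f - nmap f) := by abel
          calc ‖mulVecT Ai x - nmap f‖
              ≤ ‖mulVecT A x - f‖ + ‖mulVecT Ai x - mulVecT A x‖ + ‖f - nmap f‖ := by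
                rw [heq]; exact norm_add₃_le
          _ ≤ ‖mulVecT A x - f‖ + c * δ * R + δ := by linarith
          _ ≤ ‖mulVecT A x - f‖ + η := by linarith
        have hmatch2 : ∀ f' ∈ Fi, ∃ f ∈ F,
            ‖mulVecT A x - f‖ ≤ ‖mulVecT Ai x - f'‖ + η := by
          intro f' hf'
          obtain ⟨f, hf, rfl⟩ := Finset.mem_image.1 hf'
          refine ⟨f, hf, ?_⟩
          have h2 : ‖nmap f - f‖ ≤ δ := by
            rw [← dist_eq_norm, dist_comm]; exact (hnmap f (hFsub hf)).2
          have h1 : ‖mulVecT A x - mulVecT Ai x‖ ≤ c * δ * R := by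
            rw [norm_sub_rev]; exact hAdiff
          have heq : mulVecT A x - f =
              (mulVecT Ai x - nmap f) + (mulVecT A x - mulVecT Ai x) + (nmap f - f) := by abel
          calc ‖mulVecT A x - f‖
              ≤ ‖mulVecT Ai x - nmap f‖ + ‖mulVecT A x - mulVecT Ai x‖ + ‖nmap f - f‖ := by
                rw [heq]; exact norm_add₃_le
          _ ≤ ‖mulVecT Ai x - nmap f‖ + c * δ * R + δ := by linarith
          _ ≤ ‖mulVecT Ai x - nmap f‖ + η := by linarith
        have hcmp1 : lossFn ψ Fi Ai x ≤ lossFn ψ F A x + ε' :=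
          loss_le_loss_add ψ hψm hFne hFine A Ai x hηpos.le hψη hmatch1 hboundA
        have hcmp2 : lossFn ψ F A x ≤ lossFn ψ Fi Ai x + ε' :=
          loss_le_loss_add ψ hψm hFine hFne Ai A x hηpos.le hψη hmatch2 hboundAi
        constructor
        · show gloF (Fi, Ai) x ≤ _
          simp only [hgloFdef, if_pos hx]
          exact max_le (by linarith) (lossFn_nonneg ψ hψnn F A x)
        · show _ ≤ ghiF (Fi, Ai) x
          simp only [hghiFdef, if_pos hx]
          linarith
      · -- outside the ball
        constructor
        · show gloF (Fi, Ai) x ≤ _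
          simp only [hgloFdef, if_neg hx]
          exact lossFn_nonneg ψ hψnn F A x
        · show _ ≤ ghiF (Fi, Ai) x
          simp only [hghiFdef, if_neg hx]
          exact hloss_le_env F hFsub A hAst x
    · -- the integral gap
      have hint_hi : Integrable (ghiF (Fi, Ai)) P := ((hfam _ hzmem).1).2
      have hint_lo : Integrable (gloF (Fi, Ai)) P := ((hfam _ hzmem).2).2
      have hindm : MeasurableSet (closedBall (0 : EuclideanSpace ℝ (Fin p)) R)ᶜ :=
        measurableSet_closedBall.compl
      have hind_int : Integrable
          (fun x => 2 * ε' + ((closedBall (0:EuclideanSpace ℝ (Fin p)) R)ᶜ).indicator env x)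
          P := (integrable_const (2 * ε')).add (henv_int.indicator hindm)
      have hgap : ∀ x, ghiF (Fi, Ai) x - gloF (Fi, Ai) x ≤
          2 * ε' + ((closedBall (0:EuclideanSpace ℝ (Fin p)) R)ᶜ).indicator env x := by
        intro x
        by_cases hx : ‖x‖ ≤ R
        · have hmem : x ∈ closedBall (0 : EuclideanSpace ℝ (Fin p)) R :=
            mem_closedBall_zero_iff.2 hx
          rw [Set.indicator_of_notMem (by simpa using hmem)]
          simp only [hghiFdef, hgloFdef, if_pos hx]
          have h1 : lossFn ψ Fi Ai x - ε' ≤ max (lossFn ψ Fi Ai x - ε') 0 := le_max_left _ _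
          linarith
        · have hmem : x ∈ (closedBall (0 : EuclideanSpace ℝ (Fin p)) R)ᶜ := by
            simp [mem_closedBall_zero_iff]
            linarith [not_le.1 hx]
          rw [Set.indicator_of_mem hmem]
          simp only [hghiFdef, hgloFdef, if_neg hx]
          linarith
      have hsub : (∫ x, ghiF (Fi, Ai) x ∂P) - (∫ x, gloF (Fi, Ai) x ∂P) =
          ∫ x, (ghiF (Fi, Ai) x - gloF (Fi, Ai) x) ∂P := (integral_sub hint_hi hint_lo).symm
      rw [hsub]
      have hmono : ∫ x, (ghiF (Fi, Ai) x - gloF (Fi, Ai) x) ∂P ≤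
          ∫ x, (2 * ε' + ((closedBall (0:EuclideanSpace ℝ (Fin p)) R)ᶜ).indicator env x) ∂P :=
        integral_mono (hint_hi.sub hint_lo) hind_int hgap
      have hval : ∫ x, (2 * ε' +
          ((closedBall (0:EuclideanSpace ℝ (Fin p)) R)ᶜ).indicator env x) ∂P =
          2 * ε' + ∫ x in (closedBall (0:EuclideanSpace ℝ (Fin p)) R)ᶜ, env x ∂P := by
        rw [integral_add (integrable_const _) (henv_int.indicator hindm),
          integral_const, integral_indicator hindm]
        simp
      rw [hval] at hmono
      have : 2 * ε' + ∫ x in (closedBall (0:EuclideanSpace ℝ (Fin p)) R)ᶜ, env x ∂P < ε := by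
        rw [hε'def]
        linarith
      linarith


end
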